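/- arXiv:2202.04020 — 3 statements merged into one kernel-verified Lean document; each statement's English description precedes it below -/
import Mathlib

section
/- Let X* be an optimal solution of min_{X∈F_{n,k}} f(X) satisfying the eigen-gap assumption with some parameter δ > 0, i.e., λ_{n−k}(∇f(X*)) − λ_{n−k+1}(∇f(X*)) ≥ δ. Then X* has rank exactly k (so X* ∈ P_{n,k}), and X* is the unique minimizer of f over F_{n,k} (and hence also the unique minimizer of f over P_{n,k}). -/
open Matrix

noncomputable def frobNorm {m : ℕ} (A : Matrix (Fin m) (Fin m) ℝ) : ℝ :=
  Real.sqrt (∑ i, ∑ j, (A i j) ^ 2)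

/-- `eigval A j` is the `j`-th largest eigenvalue (1-indexed) of the symmetric matrix `A`. -/
noncomputable def eigval {m : ℕ} (A : Matrix (Fin m) (Fin m) ℝ) (j : ℕ) : ℝ :=
  if h : A.IsHermitian then
    if hj : m - j < m then (h.eigenvalues ∘ Tuple.sort h.eigenvalues) ⟨m - j, hj⟩ else 0
  else 0

/-- spectral norm: largest singular value. -/
noncomputable def specNorm {m : ℕ} (A : Matrix (Fin m) (Fin m) ℝ) : ℝ :=
  Real.sqrt (eigval (Aᵀ * A) 1)

/-- `P_{n,k}`: rank-`k` orthogonal projection matrices. -/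
def ProjSet (n k : ℕ) : Set (Matrix (Fin n) (Fin n) ℝ) :=
  {X | ∃ Q : Matrix (Fin n) (Fin k) ℝ, Qᵀ * Q = 1 ∧ X = Q * Qᵀ}

/-- The Fantope `F_{n,k}`. -/
def Fantope (n k : ℕ) : Set (Matrix (Fin n) (Fin n) ℝ) :=
  {X | X.IsSymm ∧ X.PosSemidef ∧ (1 - X).PosSemidef ∧ X.trace = (k : ℝ)}

/-! At a minimizer `X⋆` of `f` over the convex set `F_{n,k}`, the gradient inequality and the
Lipschitz continuity of `∇f` give the first-order condition `⟪∇f(X⋆), Y - X⋆⟫ ≥ 0` on `F_{n,k}`,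
so `X⋆` also minimizes the linear function `X ↦ ⟪G, X⟫`, `G = ∇f(X⋆)`. Writing `G = U diag(μ) Uᵀ`,
this linear function is `∑ μᵢ Wᵢᵢ` with `W = UᵀXU ∈ F_{n,k}`, whose diagonal is a `[0,1]`-vector
summing to `k`. The eigengap separates the `k` smallest eigenvalues strictly from the others, so
the minimum is attained only when that diagonal is the indicator of their indices `S`; since a
positive semidefinite matrix with a zero diagonal entry has a zero column, `W` is then
`diag(1_S)`. Hence the linear problem has the unique minimizer `P = U diag(1_S) Uᵀ ∈ P_{n,k}`,
so `X⋆ = P`, and by convexity any `X` with `f X ≤ f X⋆` would be a second minimizer of it. -/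

open Filter Topology

lemma frobNorm_smul {m : ℕ} (t : ℝ) (A : Matrix (Fin m) (Fin m) ℝ) :
    frobNorm (t • A) = |t| * frobNorm A := by
  rw [frobNorm, frobNorm, ← Real.sqrt_sq_eq_abs, ← Real.sqrt_mul (sq_nonneg t)]
  simp [Finset.mul_sum, mul_pow]

lemma trace_mul_le_frobNorm_mul_frobNorm {m : ℕ} (A B : Matrix (Fin m) (Fin m) ℝ) :
    (A * B).trace ≤ frobNorm A * frobNorm B := by
  have hAB : (A * B).trace = ∑ p : Fin m × Fin m, A p.1 p.2 * Bᵀ p.1 p.2 := by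
    simp [Fintype.sum_prod_type, Matrix.trace, Matrix.mul_apply]
  have hB : ∑ i, ∑ j, B i j ^ 2 = ∑ p : Fin m × Fin m, Bᵀ p.1 p.2 ^ 2 := by
    rw [Fintype.sum_prod_type, Finset.sum_comm]
    rfl
  rw [hAB, frobNorm, frobNorm, hB, ← Fintype.sum_prod_type']
  exact Real.sum_mul_le_sqrt_mul_sqrt _ _ _

lemma trace_grad_mul_sub_nonneg_of_isMinOn {m : ℕ} {S : Set (Matrix (Fin m) (Fin m) ℝ)}
    (hS : Convex ℝ S) {f : Matrix (Fin m) (Fin m) ℝ → ℝ}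
    {grad : Matrix (Fin m) (Fin m) ℝ → Matrix (Fin m) (Fin m) ℝ} {β : ℝ}
    (hconv : ∀ X ∈ S, ∀ Y ∈ S, f X + (grad X * (Y - X)).trace ≤ f Y)
    (hsmooth : ∀ X ∈ S, ∀ Y ∈ S, frobNorm (grad X - grad Y) ≤ β * frobNorm (X - Y))
    {X₀ Y : Matrix (Fin m) (Fin m) ℝ} (hX₀ : X₀ ∈ S) (hmin : IsMinOn f S X₀) (hY : Y ∈ S) :
    0 ≤ (grad X₀ * (Y - X₀)).trace := by
  set D := Y - X₀
  set c := frobNorm D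
  have hc : 0 ≤ c := Real.sqrt_nonneg _
  have hbound : ∀ t ∈ Set.Ioc (0 : ℝ) 1, -(β * c ^ 2) * t ≤ (grad X₀ * D).trace := by
    rintro t ⟨ht0, ht1⟩
    have hXt : X₀ + t • D ∈ S := hS.add_smul_sub_mem hX₀ hY ⟨ht0.le, ht1⟩
    -- Optimality and the gradient inequality at `X₀ + t • D` make the slope there nonnegative;
    -- smoothness moves it back to `X₀` at a cost of at most `β t c²`.
    have hslope : 0 ≤ (grad (X₀ + t • D) * D).trace := by
      have h := hconv _ hXt _ hX₀
      rw [show X₀ - (X₀ + t • D) = -(t • D) by abel, Matrix.mul_neg, trace_neg,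
        Matrix.mul_smul, trace_smul, smul_eq_mul] at h
      have : 0 ≤ t * (grad (X₀ + t • D) * D).trace := by linarith [isMinOn_iff.mp hmin _ hXt]
      exact nonneg_of_mul_nonneg_right this ht0
    have hlip : ((grad (X₀ + t • D) - grad X₀) * D).trace ≤ β * t * c ^ 2 :=
      calc ((grad (X₀ + t • D) - grad X₀) * D).trace
          ≤ frobNorm (grad (X₀ + t • D) - grad X₀) * c := trace_mul_le_frobNorm_mul_frobNorm _ _
        _ ≤ β * frobNorm (X₀ + t • D - X₀) * c :=
          mul_le_mul_of_nonneg_right (hsmooth _ hXt _ hX₀) hc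
        _ = β * t * c ^ 2 := by
          rw [add_sub_cancel_left, frobNorm_smul, abs_of_pos ht0]
          ring
    rw [Matrix.sub_mul, trace_sub] at hlip
    linarith
  have hlim : Tendsto (fun t : ℝ => -(β * c ^ 2) * t) (𝓝[>] 0) (𝓝 0) := by
    have h := ((tendsto_id (x := 𝓝 (0 : ℝ))).const_mul (-(β * c ^ 2))).mono_left
      (nhdsWithin_le_nhds (s := Set.Ioi 0))
    rwa [mul_zero] at h
  exact le_of_tendsto hlim (mem_of_superset (Ioc_mem_nhdsGT one_pos) hbound)

lemma eq_and_strict_min_of_unique_linear_min {m : ℕ} {S : Set (Matrix (Fin m) (Fin m) ℝ)}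
    (hS : Convex ℝ S) {f : Matrix (Fin m) (Fin m) ℝ → ℝ}
    {grad : Matrix (Fin m) (Fin m) ℝ → Matrix (Fin m) (Fin m) ℝ} {β : ℝ}
    (hconv : ∀ X ∈ S, ∀ Y ∈ S, f X + (grad X * (Y - X)).trace ≤ f Y)
    (hsmooth : ∀ X ∈ S, ∀ Y ∈ S, frobNorm (grad X - grad Y) ≤ β * frobNorm (X - Y))
    {X₀ P : Matrix (Fin m) (Fin m) ℝ} (hX₀ : X₀ ∈ S) (hmin : IsMinOn f S X₀) (hP : P ∈ S)
    (hPmin : ∀ X ∈ S, X ≠ P → (grad X₀ * P).trace < (grad X₀ * X).trace) :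
    X₀ = P ∧ ∀ X ∈ S, X ≠ X₀ → f X₀ < f X := by
  have hXP : X₀ = P := by
    by_contra hne
    have h := trace_grad_mul_sub_nonneg_of_isMinOn hS hconv hsmooth hX₀ hmin hP
    rw [Matrix.mul_sub, trace_sub] at h
    linarith [hPmin X₀ hX₀ hne]
  refine ⟨hXP, fun X hX hne => ?_⟩
  have h := hconv X₀ hX₀ X hX
  have hlt := hPmin X hX (hXP ▸ hne)
  rw [Matrix.mul_sub, trace_sub, hXP] at h
  rw [hXP] at hlt ⊢
  linarith

lemma mem_fantope_of_posSemidef {n k : ℕ} {X : Matrix (Fin n) (Fin n) ℝ} (h0 : X.PosSemidef)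
    (h1 : (1 - X).PosSemidef) (htr : X.trace = k) : X ∈ Fantope n k :=
  ⟨isHermitian_iff_isSymm.mp h0.isHermitian, h0, h1, htr⟩

lemma convex_fantope (n k : ℕ) : Convex ℝ (Fantope n k) := by
  rintro X ⟨-, hX0, hX1, hXtr⟩ Y ⟨-, hY0, hY1, hYtr⟩ a b ha hb hab
  refine mem_fantope_of_posSemidef ((hX0.smul ha).add (hY0.smul hb)) ?_ ?_
  · have h : 1 - (a • X + b • Y) = a • (1 - X) + b • (1 - Y) := by
      rw [smul_sub, smul_sub, sub_add_sub_comm, ← add_smul, hab, one_smul]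
    rw [h]
    exact (hX1.smul ha).add (hY1.smul hb)
  · rw [trace_add, trace_smul, trace_smul, hXtr, hYtr, smul_eq_mul, smul_eq_mul, ← add_mul, hab,
      one_mul]

lemma conjTranspose_mul_mul_mem_fantope {n k : ℕ} {U X : Matrix (Fin n) (Fin n) ℝ}
    (hU : Uᴴ * U = 1) (hX : X ∈ Fantope n k) : Uᴴ * X * U ∈ Fantope n k := by
  obtain ⟨-, hX0, hX1, hXtr⟩ := hX
  refine mem_fantope_of_posSemidef (hX0.conjTranspose_mul_mul_same U) ?_ ?_
  · rw [show 1 - Uᴴ * X * U = Uᴴ * (1 - X) * U by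
      rw [Matrix.mul_sub, Matrix.mul_one, Matrix.sub_mul, hU]]
    exact hX1.conjTranspose_mul_mul_same U
  · rw [Matrix.mul_assoc, trace_mul_comm, Matrix.mul_assoc, mul_eq_one_comm.mp hU,
      Matrix.mul_one, hXtr]

lemma projSet_subset_fantope (n k : ℕ) : ProjSet n k ⊆ Fantope n k := by
  rintro _ ⟨Q, hQ, rfl⟩
  have hQH : Qᵀ = Qᴴ := (conjTranspose_eq_transpose_of_trivial Q).symm
  have hidem : (1 - Q * Qᵀ)ᴴ * (1 - Q * Qᵀ) = 1 - Q * Qᵀ := by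
    have hQQ : Q * Qᵀ * (Q * Qᵀ) = Q * Qᵀ := by
      rw [Matrix.mul_assoc, ← Matrix.mul_assoc Qᵀ, hQ, Matrix.one_mul]
    rw [conjTranspose_sub, conjTranspose_one, conjTranspose_mul, ← hQH,
      conjTranspose_eq_transpose_of_trivial, transpose_transpose, Matrix.mul_sub, Matrix.mul_one,
      Matrix.sub_mul, Matrix.one_mul, hQQ, sub_self, sub_zero]
  refine mem_fantope_of_posSemidef ?_ ?_ ?_
  · rw [hQH]
    exact posSemidef_self_mul_conjTranspose Q
  · rw [← hidem]
    exact posSemidef_conjTranspose_mul_self _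
  · rw [trace_mul_comm, hQ, trace_one, Fintype.card_fin]

lemma rank_of_mem_projSet {n k : ℕ} {X : Matrix (Fin n) (Fin n) ℝ} (hX : X ∈ ProjSet n k) :
    X.rank = k := by
  obtain ⟨Q, hQ, rfl⟩ := hX
  have hk : k ≤ Q.rank := by simpa [hQ] using rank_mul_le_right Qᵀ Q
  rw [rank_self_mul_transpose]
  exact le_antisymm (rank_le_width Q) hk

lemma Matrix.PosSemidef.apply_eq_zero_of_diag_eq_zero {ι : Type*} [Fintype ι] [DecidableEq ι]
    {A : Matrix ι ι ℝ} (hA : A.PosSemidef) {j : ι} (hj : A j j = 0) (i : ι) :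
    A i j = 0 := by
  have h := (hA.dotProduct_mulVec_zero_iff (Pi.single j 1)).mp (by simpa using hj)
  simpa using congrFun h i

lemma Matrix.eq_diagonal_of_posSemidef_of_diag {ι : Type*} [Fintype ι] [DecidableEq ι]
    {W : Matrix ι ι ℝ} (h0 : W.PosSemidef) (h1 : (1 - W).PosSemidef) {d : ι → ℝ}
    (hd : ∀ i, d i = 0 ∨ d i = 1) (hdiag : ∀ i, W i i = d i) : W = diagonal d := by
  ext i j
  rcases hd j with hj | hj
  · rw [h0.apply_eq_zero_of_diag_eq_zero (j := j) (by rw [hdiag, hj]) i]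
    by_cases hij : i = j <;> simp [hij, hj]
  · have h := h1.apply_eq_zero_of_diag_eq_zero (j := j) (by simp [hdiag, hj]) i
    rw [Matrix.sub_apply, sub_eq_zero] at h
    rw [← h]
    by_cases hij : i = j <;> simp [hij, hj, one_apply]

lemma sum_mul_indicator_lt_sum_mul {ι : Type*} [Fintype ι] [DecidableEq ι] {μ y : ι → ℝ} {τ : ℝ}
    {S : Finset ι}
    (hS : ∀ i, i ∈ S ↔ μ i ≤ τ) (hy0 : ∀ i, 0 ≤ y i) (hy1 : ∀ i, y i ≤ 1)
    (hsum : ∑ i, y i = S.card) (hne : y ≠ fun i => if i ∈ S then 1 else 0) :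
    ∑ i, μ i * (if i ∈ S then 1 else 0) < ∑ i, μ i * y i := by
  set d : ι → ℝ := fun i => if i ∈ S then 1 else 0
  have hdsum : ∑ i, d i = S.card := by simp [d]
  -- if `y` vanished off `S` then `y ≤ d`, and equal sums would force `y = d`
  obtain ⟨j, hjS, hj⟩ : ∃ j ∉ S, 0 < y j := by
    by_contra! h
    have hle : ∀ i ∈ Finset.univ, y i ≤ d i := fun i _ => by
      by_cases hi : i ∈ S <;> simp [d, hi, hy1, h]
    exact hne (funext fun i =>
      (Finset.sum_eq_sum_iff_of_le hle).mp (hsum.trans hdsum.symm) i (Finset.mem_univ i))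
  have hcentered : ∑ i, μ i * y i - ∑ i, μ i * d i = ∑ i, (μ i - τ) * (y i - d i) := by
    simp only [sub_mul, mul_sub, Finset.sum_sub_distrib, ← Finset.mul_sum, hsum, hdsum]
    ring
  have hterm : ∀ i ∈ Finset.univ, 0 ≤ (μ i - τ) * (y i - d i) := fun i _ => by
    by_cases hi : i ∈ S
    · have := (hS i).mp hi
      simp only [d, if_pos hi]
      nlinarith [hy1 i]
    · have := (hS i).not.mp hi
      simp only [d, if_neg hi]
      nlinarith [hy0 i]
  have hpos : 0 < (μ j - τ) * (y j - d j) := by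
    have := (hS j).not.mp hjS
    simp only [d, if_neg hjS, sub_zero]
    exact mul_pos (by linarith) hj
  linarith [Finset.sum_pos' hterm ⟨j, Finset.mem_univ j, hpos⟩]

lemma trace_conj_diagonal_mul {ι R : Type*} [Fintype ι] [DecidableEq ι] [CommRing R] [StarRing R]
    (U : Matrix ι ι R) (μ : ι → R) (X : Matrix ι ι R) :
    (U * diagonal μ * Uᴴ * X).trace = ∑ i, μ i * (Uᴴ * X * U) i i := by
  calc (U * diagonal μ * Uᴴ * X).trace = (U * (diagonal μ * (Uᴴ * X))).trace := by
        simp only [Matrix.mul_assoc]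
    _ = (diagonal μ * (Uᴴ * X) * U).trace := trace_mul_comm _ _
    _ = ∑ i, μ i * (Uᴴ * X * U) i i := by simp [Matrix.trace, Matrix.mul_assoc, diagonal_mul]

def columnProjection {ι : Type*} [Fintype ι] [DecidableEq ι] (U : Matrix ι ι ℝ) (S : Finset ι) :
    Matrix ι ι ℝ :=
  U * diagonal (fun i => if i ∈ S then 1 else 0) * Uᴴ

lemma columnProjection_mem_projSet {n : ℕ} {U : Matrix (Fin n) (Fin n) ℝ} (hU : Uᴴ * U = 1)
    (S : Finset (Fin n)) : columnProjection U S ∈ ProjSet n S.card := by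
  set e := S.orderEmbOfFin rfl
  refine ⟨U.submatrix id e, ?_, ?_⟩
  · rw [transpose_submatrix, ← submatrix_mul _ _ _ id _ Function.bijective_id,
      ← conjTranspose_eq_transpose_of_trivial, hU]
    exact submatrix_one_embedding e.toEmbedding
  · ext i j
    rw [columnProjection, mul_apply, mul_apply (M := U.submatrix id e)]
    simp only [mul_diagonal, submatrix_apply, transpose_apply, conjTranspose_apply, star_trivial,
      id, mul_ite, mul_one, mul_zero, ite_mul, zero_mul]
    rw [← Finset.sum_filter, Finset.filter_mem_eq_inter, Finset.univ_inter]
    conv_lhs => rw [← S.map_orderEmbOfFin_univ rfl, Finset.sum_map]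
    rfl

lemma trace_mul_columnProjection_lt {n : ℕ} {U : Matrix (Fin n) (Fin n) ℝ} (hU : Uᴴ * U = 1)
    {μ : Fin n → ℝ} {τ : ℝ} {S : Finset (Fin n)} (hS : ∀ i, i ∈ S ↔ μ i ≤ τ)
    {X : Matrix (Fin n) (Fin n) ℝ} (hX : X ∈ Fantope n S.card) (hne : X ≠ columnProjection U S) :
    (U * diagonal μ * Uᴴ * columnProjection U S).trace < (U * diagonal μ * Uᴴ * X).trace := by
  have hU' : U * Uᴴ = 1 := mul_eq_one_comm.mp hU
  have hconj : ∀ D : Matrix (Fin n) (Fin n) ℝ, Uᴴ * (U * D * Uᴴ) * U = D := fun D => by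
    simp only [← Matrix.mul_assoc, hU, Matrix.one_mul]
    rw [Matrix.mul_assoc, hU, Matrix.mul_one]
  obtain ⟨-, hW0, hW1, hWtr⟩ := conjTranspose_mul_mul_mem_fantope hU hX
  rw [trace_conj_diagonal_mul, trace_conj_diagonal_mul, columnProjection, hconj]
  simp only [diagonal_apply_eq]
  refine sum_mul_indicator_lt_sum_mul hS (fun i => hW0.diag_nonneg) (fun i => ?_) hWtr ?_
  · have := hW1.diag_nonneg (i := i)
    rw [Matrix.sub_apply, one_apply_eq] at this
    linarith
  · intro hdiag
    refine hne ?_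
    have hW := eq_diagonal_of_posSemidef_of_diag hW0 hW1 (fun i => by split_ifs <;> simp)
      (congrFun hdiag)
    rw [columnProjection, ← hW]
    simp only [← Matrix.mul_assoc, hU', Matrix.one_mul]
    rw [Matrix.mul_assoc, hU', Matrix.mul_one]

lemma card_filter_le_sort_apply {n k : ℕ} (μ : Fin n → ℝ) (hkn : k < n)
    (hgap : μ (Tuple.sort μ ⟨k - 1, by omega⟩) < μ (Tuple.sort μ ⟨k, hkn⟩)) :
    (Finset.univ.filter fun i => μ i ≤ μ (Tuple.sort μ ⟨k - 1, by omega⟩)).card = k := by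
  set σ := Tuple.sort μ
  set τ := μ (σ ⟨k - 1, by omega⟩)
  have hperm : (Finset.univ.filter fun i => μ i ≤ τ).card =
      (Finset.univ.filter fun j => (μ ∘ σ) j ≤ τ).card := by
    simp only [Finset.card_filter]
    exact (Equiv.sum_comp σ (fun i => if μ i ≤ τ then 1 else 0)).symm
  have hmono : Monotone (μ ∘ σ) := Tuple.monotone_sort μ
  have hlow : k - 1 < (Finset.univ.filter fun j => (μ ∘ σ) j ≤ τ).card :=
    (Tuple.lt_card_le_iff_apply_le_of_monotone (j := ⟨k - 1, by omega⟩) hmono).mpr le_rfl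
  have hhigh : ¬ k < (Finset.univ.filter fun j => (μ ∘ σ) j ≤ τ).card := fun h =>
    hgap.not_ge ((Tuple.lt_card_le_iff_apply_le_of_monotone (j := ⟨k, hkn⟩) hmono).mp h)
  omega

lemma eigval_sub_eq {m : ℕ} {G : Matrix (Fin m) (Fin m) ℝ} (hG : G.IsHermitian) {j : ℕ}
    (hj : j < m) : eigval G (m - j) = hG.eigenvalues (Tuple.sort hG.eigenvalues ⟨j, hj⟩) := by
  rw [eigval, dif_pos hG, dif_pos (by omega)]
  simp only [Function.comp_apply, Nat.sub_sub_self hj.le]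

lemma card_filter_eigenvalues_le_eigval {n k : ℕ} {G : Matrix (Fin n) (Fin n) ℝ}
    (hG : G.IsHermitian) (hk : 0 < k) (hkn : k < n)
    (hgap : eigval G (n - k + 1) < eigval G (n - k)) :
    (Finset.univ.filter fun i => hG.eigenvalues i ≤ eigval G (n - k + 1)).card = k := by
  rw [eigval_sub_eq hG hkn] at hgap
  rw [show n - k + 1 = n - (k - 1) by omega, eigval_sub_eq hG (j := k - 1) (by omega)] at hgap ⊢
  exact card_filter_le_sort_apply _ hkn hgap

lemma Matrix.IsHermitian.exists_eq_mul_diagonal_mul_conjTranspose {n : ℕ}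
    {G : Matrix (Fin n) (Fin n) ℝ} (hG : G.IsHermitian) :
    ∃ U : Matrix (Fin n) (Fin n) ℝ, Uᴴ * U = 1 ∧ G = U * diagonal hG.eigenvalues * Uᴴ := by
  refine ⟨hG.eigenvectorUnitary, ?_, ?_⟩
  · simpa [star_eq_conjTranspose] using (mem_unitaryGroup_iff'.mp hG.eigenvectorUnitary.2)
  · simpa [Unitary.conjStarAlgAut_apply, star_eq_conjTranspose] using hG.spectral_theorem

theorem stmt0_general {n k : ℕ} (hk : 0 < k) (hkn : k < n)
    (f : Matrix (Fin n) (Fin n) ℝ → ℝ)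
    (grad : Matrix (Fin n) (Fin n) ℝ → Matrix (Fin n) (Fin n) ℝ)
    (β : ℝ)
    (hgradSymm : ∀ X : Matrix (Fin n) (Fin n) ℝ, (grad X).IsSymm)
    (hconv : ∀ X Y : Matrix (Fin n) (Fin n) ℝ, X.IsSymm → Y.IsSymm →
      f X + (grad X * (Y - X)).trace ≤ f Y)
    (hsmooth : ∀ X Y : Matrix (Fin n) (Fin n) ℝ, X.IsSymm → Y.IsSymm →
      frobNorm (grad X - grad Y) ≤ β * frobNorm (X - Y))
    (Xstar : Matrix (Fin n) (Fin n) ℝ)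
    (hXstarMem : Xstar ∈ Fantope n k)
    (hXstarOpt : ∀ X ∈ Fantope n k, f Xstar ≤ f X)
    (δ : ℝ) (hδ : 0 < δ)
    (hgap : δ ≤ eigval (grad Xstar) (n - k) - eigval (grad Xstar) (n - k + 1))
    :
    Xstar.rank = k ∧ Xstar ∈ ProjSet n k ∧
      (∀ X ∈ Fantope n k, X ≠ Xstar → f Xstar < f X) ∧
      (∀ X ∈ ProjSet n k, X ≠ Xstar → f Xstar < f X) := by
  have hG : (grad Xstar).IsHermitian := isHermitian_iff_isSymm.mpr (hgradSymm Xstar)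
  set S := Finset.univ.filter fun i => hG.eigenvalues i ≤ eigval (grad Xstar) (n - k + 1)
  have hS : S.card = k := card_filter_eigenvalues_le_eigval hG hk hkn (by linarith)
  obtain ⟨U, hU, hGU⟩ := hG.exists_eq_mul_diagonal_mul_conjTranspose
  have hP : columnProjection U S ∈ ProjSet n k := hS ▸ columnProjection_mem_projSet hU S
  have hPmin : ∀ X ∈ Fantope n k, X ≠ columnProjection U S →
      (grad Xstar * columnProjection U S).trace < (grad Xstar * X).trace := fun X hX hne => by
    rw [hGU]
    exact trace_mul_columnProjection_lt hU (fun i => Finset.mem_filter_univ i) (by rwa [hS]) hne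
  obtain ⟨hXP, hstrict⟩ := eq_and_strict_min_of_unique_linear_min (convex_fantope n k)
    (fun X hX Y hY => hconv X Y hX.1 hY.1) (fun X hX Y hY => hsmooth X Y hX.1 hY.1)
    hXstarMem hXstarOpt (projSet_subset_fantope n k hP) hPmin
  rw [← hXP] at hP
  exact ⟨rank_of_mem_projSet hP, hP, hstrict,
    fun X hX => hstrict X (projSet_subset_fantope n k hX)⟩

theorem stmt0 {n k : ℕ} (hk : 0 < k) (hkn : k < n)
    (f : Matrix (Fin n) (Fin n) ℝ → ℝ)
    (grad : Matrix (Fin n) (Fin n) ℝ → Matrix (Fin n) (Fin n) ℝ)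
    (β : ℝ) (hβ : 0 < β)
    (hgradSymm : ∀ X : Matrix (Fin n) (Fin n) ℝ, (grad X).IsSymm)
    (hconv : ∀ X Y : Matrix (Fin n) (Fin n) ℝ, X.IsSymm → Y.IsSymm →
      f X + (grad X * (Y - X)).trace ≤ f Y)
    (hsmooth : ∀ X Y : Matrix (Fin n) (Fin n) ℝ, X.IsSymm → Y.IsSymm →
      frobNorm (grad X - grad Y) ≤ β * frobNorm (X - Y))
    (Xstar : Matrix (Fin n) (Fin n) ℝ)
    (hXstarMem : Xstar ∈ Fantope n k)
    (hXstarOpt : ∀ X ∈ Fantope n k, f Xstar ≤ f X)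
    (δ : ℝ) (hδ : 0 < δ)
    (hgap : δ ≤ eigval (grad Xstar) (n - k) - eigval (grad Xstar) (n - k + 1))
    :
    Xstar.rank = k ∧ Xstar ∈ ProjSet n k ∧
      (∀ X ∈ Fantope n k, X ≠ Xstar → f Xstar < f X) ∧
      (∀ X ∈ ProjSet n k, X ≠ Xstar → f Xstar < f X) :=
  stmt0_general hk hkn f grad β hgradSymm hconv hsmooth Xstar hXstarMem hXstarOpt δ hδ hgap
end

section
/- Let X be an n×n real symmetric matrix with eigen-decomposition X = Σ_{i=1}^n γ_i u_iu_iᵀ, where γ₁ ≥ γ₂ ≥ ... ≥ γ_n and {u_i} is an orthonormal basis. Let θ ∈ ℝ satisfy Σ_{i=1}^n min(max(γ_i − θ, 0), 1) = k, and set X̂ = Σ_{i=1}^n min(max(γ_i − θ, 0), 1)·u_iu_iᵀ, which is the Euclidean (Frobenius-norm) projection of X onto the Fantope F_{n,k}. Then for every r ∈ {k, ..., n−1}: rank(X̂) ≤ r if and only if Σ_{i=1}^r min(γ_i − γ_{r+1}, 1) ≥ k. -/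
open Matrix

theorem stmt7 {n k : ℕ} (hk : 0 < k) (hkn : k ≤ n)
    (γ : Fin n → ℝ) (hγ : Antitone γ)
    (u : Fin n → (Fin n → ℝ))
    (hu : ∀ i j : Fin n, u i ⬝ᵥ u j = if i = j then (1 : ℝ) else 0)
    (X : Matrix (Fin n) (Fin n) ℝ)
    (hX : X = ∑ i : Fin n, γ i • vecMulVec (u i) (u i))
    (θ : ℝ)
    (hθ : ∑ i : Fin n, min (max (γ i - θ) 0) 1 = (k : ℝ))
    (Xhat : Matrix (Fin n) (Fin n) ℝ)
    (hXhat : Xhat = ∑ i : Fin n, (min (max (γ i - θ) 0) 1) • vecMulVec (u i) (u i)) :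
    ∀ r : ℕ, k ≤ r → ∀ hr : r < n,
      (Xhat.rank ≤ r ↔
        (k : ℝ) ≤ ∑ i ∈ Finset.univ.filter (fun i : Fin n => (i : ℕ) < r),
          min (γ i - γ ⟨r, hr⟩) 1) := by
  classical
  intro r hkr hr
  set c : Fin n → ℝ := fun i => min (max (γ i - θ) 0) 1 with hc
  have hc0 : ∀ i, 0 ≤ c i := fun i => le_min (le_max_right _ _) zero_le_one
  have hcanti : Antitone c := fun i j hij =>
    min_le_min (max_le_max (sub_le_sub_right (hγ hij) θ) le_rfl) le_rfl
  have hczero : ∀ i, c i = 0 ↔ γ i ≤ θ := by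
    intro i
    constructor
    · intro h
      by_contra hlt
      push_neg at hlt
      have : (0 : ℝ) < c i :=
        lt_min (lt_max_of_lt_left (sub_pos.mpr hlt)) one_pos
      linarith
    · intro h
      simp only [hc]
      rw [max_eq_right (by linarith), min_eq_left zero_le_one]
  -- rank computation
  set U : Matrix (Fin n) (Fin n) ℝ := Matrix.of u with hU
  have hUU : U * Uᵀ = 1 := by
    ext i j
    have := hu i j
    simp only [dotProduct] at this
    simp [Matrix.mul_apply, Matrix.one_apply, hU, this]
  have hdet : IsUnit U.det := Matrix.isUnit_det_of_right_inverse hUU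
  have hdetT : IsUnit Uᵀ.det := by rw [Matrix.det_transpose]; exact hdet
  have hXhat' : Xhat = Uᵀ * (Matrix.diagonal c * U) := by
    subst hXhat
    ext a b
    simp only [Matrix.mul_apply, Matrix.transpose_apply, Matrix.diagonal_apply,
      Matrix.sum_apply, Matrix.smul_apply, Matrix.vecMulVec_apply, smul_eq_mul,
      Matrix.of_apply, hU, ite_mul, zero_mul, Finset.sum_ite_eq,
      Finset.mem_univ, if_true]
    exact Finset.sum_congr rfl fun x _ => by ring
  have hrank : Xhat.rank = (Finset.univ.filter (fun i => c i ≠ 0)).card := by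
    rw [hXhat', Matrix.rank_mul_eq_right_of_isUnit_det _ _ hdetT,
      Matrix.rank_mul_eq_left_of_isUnit_det _ _ hdet, Matrix.rank_diagonal,
      Fintype.card_subtype]
  have key : Xhat.rank ≤ r ↔ c ⟨r, hr⟩ = 0 := by
    rw [hrank]
    constructor
    · intro h
      by_contra hne
      have hsub : Finset.Iic (⟨r, hr⟩ : Fin n) ⊆
          Finset.univ.filter (fun i => c i ≠ 0) := by
        intro i hi
        rw [Finset.mem_Iic] at hi
        refine Finset.mem_filter.mpr ⟨Finset.mem_univ _, fun h0 => hne ?_⟩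
        exact le_antisymm (h0 ▸ hcanti hi) (hc0 _)
      have := (Finset.card_le_card hsub).trans h
      rw [Fin.card_Iic] at this
      simp only [Fin.val_mk] at this
      omega
    · intro h0
      have hsub : Finset.univ.filter (fun i => c i ≠ 0) ⊆
          Finset.Iio (⟨r, hr⟩ : Fin n) := by
        intro i hi
        rw [Finset.mem_filter] at hi
        rw [Finset.mem_Iio]
        by_contra hlt
        push_neg at hlt
        exact hi.2 (le_antisymm (h0 ▸ hcanti hlt) (hc0 i))
      have := Finset.card_le_card hsub
      rwa [Fin.card_Iio] at this
  rw [key]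
  have hmemS : ∀ i : Fin n,
      i ∈ Finset.univ.filter (fun i : Fin n => (i : ℕ) < r) ↔ i ≤ ⟨r, hr⟩ ∧ (i : ℕ) < r := by
    intro i
    simp [Finset.mem_filter, Fin.le_def]
    omega
  constructor
  · intro h0
    have hθr : γ ⟨r, hr⟩ ≤ θ := (hczero _).mp h0
    have hsum1 : ∑ i : Fin n, c i =
        ∑ i ∈ Finset.univ.filter (fun i : Fin n => (i : ℕ) < r), c i := by
      refine (Finset.sum_subset (Finset.filter_subset _ _) fun i _ hi => ?_).symm
      rw [Finset.mem_filter] at hi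
      push_neg at hi
      have hle : (⟨r, hr⟩ : Fin n) ≤ i := by
        rw [Fin.le_def]
        exact hi (Finset.mem_univ _)
      exact le_antisymm (h0 ▸ hcanti hle) (hc0 i)
    have hle2 : ∀ i ∈ Finset.univ.filter (fun i : Fin n => (i : ℕ) < r),
        c i ≤ min (γ i - γ ⟨r, hr⟩) 1 := by
      intro i hi
      rw [Finset.mem_filter] at hi
      have hir : i ≤ (⟨r, hr⟩ : Fin n) := by
        rw [Fin.le_def]; exact Nat.le_of_lt hi.2
      have hγi : γ ⟨r, hr⟩ ≤ γ i := hγ hir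
      refine le_min ?_ (min_le_right _ _)
      rcases le_or_gt (γ i) θ with hle | hlt
      · rw [(hczero i).mpr hle]
        linarith
      · have : c i ≤ max (γ i - θ) 0 := min_le_left _ _
        rw [max_eq_left (by linarith)] at this
        linarith
    calc (k : ℝ) = ∑ i : Fin n, c i := hθ.symm
      _ = ∑ i ∈ Finset.univ.filter (fun i : Fin n => (i : ℕ) < r), c i := hsum1
      _ ≤ _ := Finset.sum_le_sum hle2
  · intro hsum
    rw [hczero]
    by_contra hlt
    push_neg at hlt
    have hcr : (0 : ℝ) < c ⟨r, hr⟩ :=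
      lt_min (lt_max_of_lt_left (sub_pos.mpr hlt)) one_pos
    have hle2 : ∀ i ∈ Finset.univ.filter (fun i : Fin n => (i : ℕ) < r),
        min (γ i - γ ⟨r, hr⟩) 1 ≤ c i := by
      intro i _
      exact le_min (le_trans (min_le_left _ _)
        (le_trans (by linarith) (le_max_left _ _))) (min_le_right _ _)
    have h1 : (k : ℝ) ≤ ∑ i ∈ Finset.univ.filter (fun i : Fin n => (i : ℕ) < r), c i :=
      hsum.trans (Finset.sum_le_sum hle2)
    have hnotmem : (⟨r, hr⟩ : Fin n) ∉ Finset.univ.filter (fun i : Fin n => (i : ℕ) < r) := by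
      simp
    have h2 : (∑ i ∈ Finset.univ.filter (fun i : Fin n => (i : ℕ) < r), c i) + c ⟨r, hr⟩
        ≤ ∑ i : Fin n, c i := by
      rw [add_comm, ← Finset.sum_insert hnotmem]
      exact Finset.sum_le_sum_of_subset_of_nonneg (Finset.subset_univ _)
        fun i _ _ => hc0 i
    rw [hθ] at h2
    linarith
end

section
/- Suppose X* ∈ F_{n,k} is an optimal solution of min_{X∈F_{n,k}} f(X) satisfying the eigen-gap assumption with parameter δ > 0, and let η > 0. Then for any X ∈ F_{n,k} with ‖X − X*‖_F ≤ ηδ/(2(1+ηβ)), it holds that rank(Π_{F_{n,k}}[X − η∇f(X)]) = k. -/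
open Matrix

/-!
First-order optimality gives `⟪∇f(X*), Z - X*⟫ ≥ 0` on the Fantope. Tested against the spectral
projector onto the `k` smallest eigenvalues of `G = ∇f(X*)`, a Ky Fan-type inequality with the
eigen-gap `δ` forces `X*` to be that projector, so `X* - ηG` has `k` eigenvalues at least
`1 + ηδ` above all others. The gradient step is `(1 + ηβ)`-Lipschitz, so `W = X - η∇f(X)` lies
within `ηδ/2` of `X* - ηG` in Frobenius norm; comparing Rayleigh quotients on subspaces of
complementary dimension shows that `W` still has exactly `k` eigenvalues in the upper cluster,
separated from the others by a gap of at least `1`. For such `W` the same Ky Fan-type inequality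
shows that the spectral projector onto its top `k` eigenvalues satisfies the variational
inequality characterising the Euclidean projection onto the Fantope; so it is `Π(W)`, of rank `k`.
-/

namespace FantopeProjection

open scoped InnerProductSpace

variable {n : ℕ}

lemma dotProduct_self_nonneg (u : Fin n → ℝ) : 0 ≤ u ⬝ᵥ u := by
  simpa using dotProduct_star_self_nonneg u

lemma _root_.Matrix.PosSemidef.apply_eq_zero_of_diag_eq_zero_s8 {A : Matrix (Fin n) (Fin n) ℝ}
    (hA : A.PosSemidef) {j : Fin n} (hj : A j j = 0) (i : Fin n) : A i j = 0 := by
  have h := (hA.dotProduct_mulVec_zero_iff (Pi.single j 1)).mp (by simpa using hj)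
  simpa using congrFun h i

lemma eq_diagonal_of_diag_eq_zero_or_one {A : Matrix (Fin n) (Fin n) ℝ} (hA : A.PosSemidef)
    (hA' : (1 - A).PosSemidef) (h : ∀ i, A i i = 0 ∨ A i i = 1) :
    A = diagonal fun i => A i i := by
  ext i j
  rcases eq_or_ne i j with rfl | hij
  · simp
  rw [Matrix.diagonal_apply_ne _ hij]
  rcases h j with h0 | h1
  · exact hA.apply_eq_zero_of_diag_eq_zero_s8 h0 i
  · simpa [Matrix.one_apply_ne hij] using
      hA'.apply_eq_zero_of_diag_eq_zero_s8 (j := j) (by simp [h1]) i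

section frobenius

def frobVec : Matrix (Fin n) (Fin n) ℝ →ₗ[ℝ] EuclideanSpace ℝ (Fin n × Fin n) where
  toFun A := WithLp.toLp 2 fun p => A p.1 p.2
  map_add' _ _ := rfl
  map_smul' _ _ := rfl

@[simp] lemma frobVec_apply (A : Matrix (Fin n) (Fin n) ℝ) (p : Fin n × Fin n) :
    frobVec A p = A p.1 p.2 := rfl

lemma frobVec_injective : Function.Injective (frobVec (n := n)) := fun A B h => by
  ext i j
  simpa using congrArg (· (i, j)) h

lemma frobNorm_eq_norm_frobVec (A : Matrix (Fin n) (Fin n) ℝ) : frobNorm A = ‖frobVec A‖ := by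
  simp [frobNorm, EuclideanSpace.norm_eq, Fintype.sum_prod_type]

lemma frobNorm_nonneg (A : Matrix (Fin n) (Fin n) ℝ) : 0 ≤ frobNorm A := Real.sqrt_nonneg _

lemma frobNorm_smul (c : ℝ) (A : Matrix (Fin n) (Fin n) ℝ) :
    frobNorm (c • A) = |c| * frobNorm A := by
  rw [frobNorm_eq_norm_frobVec, frobNorm_eq_norm_frobVec, map_smul, norm_smul, Real.norm_eq_abs]

lemma frobNorm_add_le (A B : Matrix (Fin n) (Fin n) ℝ) :
    frobNorm (A + B) ≤ frobNorm A + frobNorm B := by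
  simp only [frobNorm_eq_norm_frobVec, map_add]
  exact norm_add_le _ _

lemma frobNorm_sub_comm (A B : Matrix (Fin n) (Fin n) ℝ) :
    frobNorm (A - B) = frobNorm (B - A) := by
  rw [frobNorm_eq_norm_frobVec, frobNorm_eq_norm_frobVec, map_sub, map_sub, norm_sub_rev]

lemma frobNorm_transpose (A : Matrix (Fin n) (Fin n) ℝ) : frobNorm Aᵀ = frobNorm A := by
  simp only [frobNorm, Matrix.transpose_apply]
  rw [Finset.sum_comm]

lemma inner_frobVec (A B : Matrix (Fin n) (Fin n) ℝ) :
    ⟪frobVec A, frobVec B⟫_ℝ = ∑ i, ∑ j, A i j * B i j := by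
  simp [PiLp.inner_apply, Fintype.sum_prod_type, mul_comm]

lemma inner_frobVec_eq_trace (A B : Matrix (Fin n) (Fin n) ℝ) :
    ⟪frobVec A, frobVec B⟫_ℝ = (Aᵀ * B).trace := by
  rw [inner_frobVec, Finset.sum_comm]
  simp [Matrix.trace, Matrix.mul_apply]

lemma trace_mul_le_frobNorm_mul (A B : Matrix (Fin n) (Fin n) ℝ) :
    (A * B).trace ≤ frobNorm A * frobNorm B := by
  rw [← frobNorm_transpose A, frobNorm_eq_norm_frobVec, frobNorm_eq_norm_frobVec,
    ← Matrix.transpose_transpose A, ← inner_frobVec_eq_trace, Matrix.transpose_transpose]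
  exact real_inner_le_norm _ _

lemma dotProduct_mulVec_le_frobNorm_mul (E : Matrix (Fin n) (Fin n) ℝ) (u : Fin n → ℝ) :
    u ⬝ᵥ (E *ᵥ u) ≤ frobNorm E * (u ⬝ᵥ u) := by
  have hinner : u ⬝ᵥ (E *ᵥ u) = ⟪frobVec E, frobVec (Matrix.vecMulVec u u)⟫_ℝ := by
    simp only [inner_frobVec, dotProduct, Matrix.mulVec, Matrix.vecMulVec_apply, Finset.mul_sum]
    exact Finset.sum_congr rfl fun i _ => Finset.sum_congr rfl fun j _ => by ring
  have hnorm : ‖frobVec (Matrix.vecMulVec u u)‖ = u ⬝ᵥ u := by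
    have hsq : ∑ i, ∑ j, Matrix.vecMulVec u u i j ^ 2 = (u ⬝ᵥ u) ^ 2 := by
      simp only [Matrix.vecMulVec_apply, dotProduct, sq, Finset.sum_mul_sum]
      exact Finset.sum_congr rfl fun i _ => Finset.sum_congr rfl fun j _ => by ring
    rw [← frobNorm_eq_norm_frobVec, frobNorm, hsq, Real.sqrt_sq (dotProduct_self_nonneg u)]
  rw [hinner, frobNorm_eq_norm_frobVec, ← hnorm]
  exact real_inner_le_norm _ _

/-- `‖Y - W‖² ≥ ‖Y - Q‖² + ‖Q - W‖²` when the angle at `Q` is not obtuse. -/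
lemma eq_of_frobNorm_sub_le_of_trace_nonneg {W Q Y : Matrix (Fin n) (Fin n) ℝ}
    (htr : 0 ≤ ((Q - W)ᵀ * (Y - Q)).trace) (hY : frobNorm (Y - W) ≤ frobNorm (Q - W)) :
    Y = Q := by
  rw [← inner_frobVec_eq_trace, real_inner_comm] at htr
  rw [frobNorm_eq_norm_frobVec, frobNorm_eq_norm_frobVec, ← sub_add_sub_cancel Y Q W,
    map_add] at hY
  have hsq := norm_add_sq_real (frobVec (Y - Q)) (frobVec (Q - W))
  have hzero : ‖frobVec (Y - Q)‖ = 0 := by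
    nlinarith [norm_nonneg (frobVec (Y - Q)), norm_nonneg (frobVec (Y - Q) + frobVec (Q - W))]
  rw [norm_eq_zero, ← map_zero frobVec] at hzero
  exact sub_eq_zero.1 (frobVec_injective hzero)

end frobenius

section conjugation

variable {V : Matrix (Fin n) (Fin n) ℝ}

lemma mul_transpose_eq_one (hV : Vᵀ * V = 1) : V * Vᵀ = 1 := mul_eq_one_comm.mp hV

lemma isUnit_det_of_transpose_mul_self (hV : Vᵀ * V = 1) : IsUnit V.det :=
  isUnit_iff_exists_inv.mpr ⟨V.det, by
    simpa [Matrix.det_mul, Matrix.det_transpose] using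
      congrArg Matrix.det (mul_transpose_eq_one hV)⟩

lemma isSymm_conj_diagonal (V : Matrix (Fin n) (Fin n) ℝ) (d : Fin n → ℝ) :
    (V * diagonal d * Vᵀ).IsSymm := by
  simp [Matrix.IsSymm, Matrix.transpose_mul, Matrix.mul_assoc]

lemma posSemidef_conj_diagonal (V : Matrix (Fin n) (Fin n) ℝ) {d : Fin n → ℝ}
    (hd : ∀ i, 0 ≤ d i) : (V * diagonal d * Vᵀ).PosSemidef := by
  simpa using (Matrix.PosSemidef.diagonal (fun i => hd i)).mul_mul_conjTranspose_same V

lemma conj_diagonal_sub (V : Matrix (Fin n) (Fin n) ℝ) (d e : Fin n → ℝ) :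
    V * diagonal d * Vᵀ - V * diagonal e * Vᵀ = V * diagonal (d - e) * Vᵀ := by
  rw [← Matrix.sub_mul, ← Matrix.mul_sub, Matrix.diagonal_sub, Pi.sub_def]

lemma smul_conj_diagonal (V : Matrix (Fin n) (Fin n) ℝ) (r : ℝ) (d : Fin n → ℝ) :
    r • (V * diagonal d * Vᵀ) = V * diagonal (r • d) * Vᵀ := by
  rw [Matrix.diagonal_smul, Matrix.mul_smul, Matrix.smul_mul]

lemma neg_conj_diagonal (V : Matrix (Fin n) (Fin n) ℝ) (d : Fin n → ℝ) :
    -(V * diagonal d * Vᵀ) = V * diagonal (-d) * Vᵀ := by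
  rw [← Matrix.neg_mul, ← Matrix.mul_neg, Matrix.diagonal_neg]
  rfl

lemma one_sub_conj_diagonal (hV : Vᵀ * V = 1) (d : Fin n → ℝ) :
    1 - V * diagonal d * Vᵀ = V * diagonal (1 - d) * Vᵀ := by
  rw [← conj_diagonal_sub, Pi.one_def, Matrix.diagonal_one, Matrix.mul_one,
    mul_transpose_eq_one hV]

lemma conj_transpose_conj (hV : Vᵀ * V = 1) (Z : Matrix (Fin n) (Fin n) ℝ) :
    V * (Vᵀ * Z * V) * Vᵀ = Z := by
  simp only [← Matrix.mul_assoc, mul_transpose_eq_one hV, Matrix.one_mul]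
  rw [Matrix.mul_assoc, mul_transpose_eq_one hV, Matrix.mul_one]

lemma trace_conj_diagonal_mul (V : Matrix (Fin n) (Fin n) ℝ) (d : Fin n → ℝ)
    (Z : Matrix (Fin n) (Fin n) ℝ) :
    (V * diagonal d * Vᵀ * Z).trace = ∑ i, d i * (Vᵀ * Z * V) i i := by
  rw [Matrix.mul_assoc, Matrix.mul_assoc, Matrix.trace_mul_comm, Matrix.mul_assoc,
    Matrix.trace_mul_comm]
  simp [Matrix.trace, Matrix.mul_diagonal, mul_comm]

lemma rank_conj_diagonal (hV : Vᵀ * V = 1) (d : Fin n → ℝ) :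
    (V * diagonal d * Vᵀ).rank = Fintype.card {i // d i ≠ 0} := by
  have hdet := isUnit_det_of_transpose_mul_self hV
  rw [Matrix.mul_assoc, Matrix.rank_mul_eq_right_of_isUnit_det V _ hdet,
    Matrix.rank_mul_eq_left_of_isUnit_det Vᵀ _ (by rwa [Matrix.det_transpose]),
    Matrix.rank_diagonal]

lemma conj_diagonal_mem_fantope {k : ℕ} (hV : Vᵀ * V = 1) {d : Fin n → ℝ} (hd₀ : ∀ i, 0 ≤ d i)
    (hd₁ : ∀ i, d i ≤ 1) (hsum : ∑ i, d i = k) : V * diagonal d * Vᵀ ∈ Fantope n k := by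
  refine ⟨isSymm_conj_diagonal V d, posSemidef_conj_diagonal V hd₀, ?_, ?_⟩
  · rw [one_sub_conj_diagonal hV]
    exact posSemidef_conj_diagonal V fun i => sub_nonneg.2 (hd₁ i)
  · rw [Matrix.trace_mul_cycle, hV, Matrix.one_mul, Matrix.trace_diagonal, hsum]

lemma transpose_conj_mem_fantope {k : ℕ} (hV : Vᵀ * V = 1) {Z : Matrix (Fin n) (Fin n) ℝ}
    (hZ : Z ∈ Fantope n k) : Vᵀ * Z * V ∈ Fantope n k := by
  obtain ⟨hZs, hZ₀, hZ₁, hZt⟩ := hZ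
  refine ⟨?_, by simpa using hZ₀.mul_mul_conjTranspose_same Vᵀ, ?_, ?_⟩
  · simp [Matrix.IsSymm, Matrix.transpose_mul, hZs.eq, Matrix.mul_assoc]
  · have h : 1 - Vᵀ * Z * V = Vᵀ * (1 - Z) * V := by
      rw [Matrix.mul_sub, Matrix.sub_mul, Matrix.mul_one, hV]
    simpa [h] using hZ₁.mul_mul_conjTranspose_same Vᵀ
  · rw [Matrix.trace_mul_cycle, mul_transpose_eq_one hV, Matrix.one_mul, hZt]

end conjugation

lemma convex_fantope (k : ℕ) : Convex ℝ (Fantope n k) := by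
  rintro X ⟨hXs, hX₀, hX₁, hXt⟩ Z ⟨hZs, hZ₀, hZ₁, hZt⟩ s t hs ht hst
  have hsub : 1 - (s • X + t • Z) = s • (1 - X) + t • (1 - Z) := by
    linear_combination (norm := module) -hst • (1 : Matrix (Fin n) (Fin n) ℝ)
  refine ⟨(hXs.smul s).add (hZs.smul t), (hX₀.smul hs).add (hZ₀.smul ht), ?_, ?_⟩
  · rw [hsub]
    exact (hX₁.smul hs).add (hZ₁.smul ht)
  · rw [Matrix.trace_add, Matrix.trace_smul, Matrix.trace_smul, hXt, hZt, smul_eq_mul,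
      smul_eq_mul, ← add_mul, hst, one_mul]

lemma sum_add_mul_sum_compl_le_sum_mul {ι : Type*} [Fintype ι] [DecidableEq ι] {w z : ι → ℝ}
    {T : Finset ι} {c g : ℝ} (hwT : ∀ i ∈ T, w i ≤ c) (hwTc : ∀ i ∉ T, c + g ≤ w i)
    (hzT : ∀ i ∈ T, z i ≤ 1) (hzTc : ∀ i ∉ T, 0 ≤ z i) (hz : ∑ i, z i = T.card) :
    ∑ i ∈ T, w i + g * ∑ i ∈ Tᶜ, z i ≤ ∑ i, w i * z i := by
  have hT : ∑ i ∈ T, (w i - c * (1 - z i)) ≤ ∑ i ∈ T, w i * z i :=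
    Finset.sum_le_sum fun i hi => by nlinarith [hwT i hi, hzT i hi]
  have hTc : ∑ i ∈ Tᶜ, (c + g) * z i ≤ ∑ i ∈ Tᶜ, w i * z i :=
    Finset.sum_le_sum fun i hi =>
      mul_le_mul_of_nonneg_right (hwTc i (Finset.mem_compl.1 hi)) (hzTc i (Finset.mem_compl.1 hi))
  rw [← Finset.sum_add_sum_compl T fun i => w i * z i]
  simp only [Finset.sum_sub_distrib, ← Finset.mul_sum, Finset.sum_const, nsmul_eq_mul,
    mul_one] at hT hTc
  linear_combination hT + hTc - c * ((Finset.sum_add_sum_compl T z).trans hz)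

/-- For orthogonal `V`, the orthogonal projection onto the span of the columns `V j`, `j ∈ T`. -/
def spectralProj (V : Matrix (Fin n) (Fin n) ℝ) (T : Finset (Fin n)) : Matrix (Fin n) (Fin n) ℝ :=
  V * diagonal (fun i => if i ∈ T then 1 else 0) * Vᵀ

section spectralProj

variable {k : ℕ} {V : Matrix (Fin n) (Fin n) ℝ} {T : Finset (Fin n)}

lemma spectralProj_mem_fantope (hV : Vᵀ * V = 1) (hT : T.card = k) :
    spectralProj V T ∈ Fantope n k :=
  conj_diagonal_mem_fantope hV (fun i => by split_ifs <;> norm_num)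
    (fun i => by split_ifs <;> norm_num) (by simp [Finset.sum_ite_mem, hT])

lemma rank_spectralProj (hV : Vᵀ * V = 1) : (spectralProj V T).rank = T.card := by
  rw [spectralProj, rank_conj_diagonal hV]
  simp [Fintype.card_subtype]

lemma trace_conj_diagonal_mul_spectralProj (hV : Vᵀ * V = 1) (w : Fin n → ℝ) :
    (V * diagonal w * Vᵀ * spectralProj V T).trace = ∑ i ∈ T, w i := by
  rw [spectralProj, trace_conj_diagonal_mul, ← Matrix.mul_assoc, ← Matrix.mul_assoc, hV,
    Matrix.one_mul, Matrix.mul_assoc, hV, Matrix.mul_one]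
  simp [Finset.sum_ite_mem]

lemma sum_add_mul_le_trace_conj_diagonal_mul (hV : Vᵀ * V = 1) {Z : Matrix (Fin n) (Fin n) ℝ}
    (hZ : Z ∈ Fantope n k) (hT : T.card = k) {w : Fin n → ℝ} {c g : ℝ}
    (hwT : ∀ i ∈ T, w i ≤ c) (hwTc : ∀ i ∉ T, c + g ≤ w i) :
    ∑ i ∈ T, w i + g * ∑ i ∈ Tᶜ, (Vᵀ * Z * V) i i ≤ (V * diagonal w * Vᵀ * Z).trace := by
  obtain ⟨-, hZ₀, hZ₁, hZt⟩ := transpose_conj_mem_fantope hV hZ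
  rw [trace_conj_diagonal_mul]
  refine sum_add_mul_sum_compl_le_sum_mul hwT hwTc (fun i _ => ?_) (fun i _ => hZ₀.diag_nonneg)
    (hT ▸ hZt)
  simpa using hZ₁.diag_nonneg (i := i)

lemma eq_spectralProj_of_frobNorm_le (hV : Vᵀ * V = 1) (hT : T.card = k) {l : Fin n → ℝ}
    {a b : ℝ} (hlT : ∀ i ∈ T, b ≤ l i) (hlTc : ∀ i ∉ T, l i ≤ a) (hab : a + 1 ≤ b)
    {Y : Matrix (Fin n) (Fin n) ℝ} (hY : Y ∈ Fantope n k)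
    (hmin : frobNorm (Y - V * diagonal l * Vᵀ) ≤
      frobNorm (spectralProj V T - V * diagonal l * Vᵀ)) :
    Y = spectralProj V T := by
  set w : Fin n → ℝ := (fun i => if i ∈ T then 1 else 0) - l
  have hw : spectralProj V T - V * diagonal l * Vᵀ = V * diagonal w * Vᵀ := conj_diagonal_sub ..
  have hKyFan := sum_add_mul_le_trace_conj_diagonal_mul hV hY hT (w := w) (c := 1 - b) (g := 0)
    (fun i hi => by simp [w, hi]; linarith [hlT i hi])
    (fun i hi => by simp [w, hi]; linarith [hlTc i hi])
  refine eq_of_frobNorm_sub_le_of_trace_nonneg ?_ hmin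
  rw [hw, (isSymm_conj_diagonal V w).eq, Matrix.mul_sub, Matrix.trace_sub,
    trace_conj_diagonal_mul_spectralProj hV]
  linarith

lemma eq_spectralProj_of_trace_le (hV : Vᵀ * V = 1) {Z : Matrix (Fin n) (Fin n) ℝ}
    (hZ : Z ∈ Fantope n k) (hT : T.card = k) {w : Fin n → ℝ} {c g : ℝ} (hg : 0 < g)
    (hwT : ∀ i ∈ T, w i ≤ c) (hwTc : ∀ i ∉ T, c + g ≤ w i)
    (hle : (V * diagonal w * Vᵀ * Z).trace ≤ ∑ i ∈ T, w i) :
    Z = spectralProj V T := by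
  obtain ⟨-, hZ₀, hZ₁, hZt⟩ := transpose_conj_mem_fantope hV hZ
  set Z' := Vᵀ * Z * V
  have hZ₁' : ∀ i, 0 ≤ 1 - Z' i i := fun i => by simpa using hZ₁.diag_nonneg (i := i)
  have hKyFan := sum_add_mul_le_trace_conj_diagonal_mul hV hZ hT hwT hwTc
  have hoff : ∀ i ∉ T, Z' i i = 0 := by
    have hsum : ∑ i ∈ Tᶜ, Z' i i = 0 := by
      nlinarith [Finset.sum_nonneg fun i (_ : i ∈ Tᶜ) => hZ₀.diag_nonneg (i := i)]
    exact fun i hi => (Finset.sum_eq_zero_iff_of_nonneg fun j _ => hZ₀.diag_nonneg).1 hsum i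
      (Finset.mem_compl.2 hi)
  have hon : ∀ i ∈ T, Z' i i = 1 := by
    have hsum : ∑ i ∈ T, (1 - Z' i i) = 0 := by
      have hsplit := Finset.sum_add_sum_compl T fun i => Z' i i
      rw [Finset.sum_eq_zero fun i hi => hoff i (Finset.mem_compl.1 hi), add_zero] at hsplit
      rw [Finset.sum_sub_distrib, hsplit]
      simp [hT, ← hZt, Matrix.trace]
    exact fun i hi => by
      linarith [(Finset.sum_eq_zero_iff_of_nonneg fun j _ => hZ₁' j).1 hsum i hi]
  have hdiag : Z' = diagonal fun i => if i ∈ T then 1 else 0 := by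
    rw [eq_diagonal_of_diag_eq_zero_or_one hZ₀ hZ₁ fun i => ?_]
    · congr 1
      ext i
      split_ifs with hi
      exacts [hon i hi, hoff i hi]
    · by_cases hi : i ∈ T
      exacts [Or.inr (hon i hi), Or.inl (hoff i hi)]
  rw [spectralProj, ← hdiag, conj_transpose_conj hV]

end spectralProj

section optimality

variable {f : Matrix (Fin n) (Fin n) ℝ → ℝ}
  {grad : Matrix (Fin n) (Fin n) ℝ → Matrix (Fin n) (Fin n) ℝ} {β : ℝ}

lemma frobNorm_gradient_step_sub_le
    (hsmooth : ∀ X Y : Matrix (Fin n) (Fin n) ℝ, X.IsSymm → Y.IsSymm →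
      frobNorm (grad X - grad Y) ≤ β * frobNorm (X - Y))
    {η : ℝ} (hη : 0 ≤ η) {X Y : Matrix (Fin n) (Fin n) ℝ} (hX : X.IsSymm) (hY : Y.IsSymm) :
    frobNorm ((X - η • grad X) - (Y - η • grad Y)) ≤ (1 + η * β) * frobNorm (X - Y) := by
  have hsplit : (X - η • grad X) - (Y - η • grad Y) = (X - Y) + (-η) • (grad X - grad Y) := by
    module
  calc frobNorm ((X - η • grad X) - (Y - η • grad Y))
      ≤ frobNorm (X - Y) + frobNorm ((-η) • (grad X - grad Y)) := hsplit ▸ frobNorm_add_le _ _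
    _ = frobNorm (X - Y) + η * frobNorm (grad X - grad Y) := by
        rw [frobNorm_smul, abs_neg, abs_of_nonneg hη]
    _ ≤ (1 + η * β) * frobNorm (X - Y) := by nlinarith [hsmooth X Y hX hY]

lemma trace_grad_mul_sub_nonneg_of_isMinOn {K : Set (Matrix (Fin n) (Fin n) ℝ)}
    (hK : Convex ℝ K) (hKsymm : ∀ X ∈ K, X.IsSymm)
    (hconv : ∀ X Y : Matrix (Fin n) (Fin n) ℝ, X.IsSymm → Y.IsSymm →
      f X + (grad X * (Y - X)).trace ≤ f Y)
    (hsmooth : ∀ X Y : Matrix (Fin n) (Fin n) ℝ, X.IsSymm → Y.IsSymm →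
      frobNorm (grad X - grad Y) ≤ β * frobNorm (X - Y))
    {Xstar : Matrix (Fin n) (Fin n) ℝ} (hXstar : Xstar ∈ K) (hopt : IsMinOn f K Xstar)
    {Z : Matrix (Fin n) (Fin n) ℝ} (hZ : Z ∈ K) :
    0 ≤ (grad Xstar * (Z - Xstar)).trace := by
  set D := Z - Xstar
  have hnear : ∀ t ∈ Set.Ioc (0 : ℝ) 1, -(t * (β * frobNorm D ^ 2)) ≤ (grad Xstar * D).trace := by
    rintro t ⟨ht₀, ht₁⟩
    set Xt := Xstar + t • D
    have hXt : Xt ∈ K := by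
      convert hK hXstar hZ (sub_nonneg.2 ht₁) ht₀.le (sub_add_cancel 1 t) using 1
      simp only [Xt, D]
      module
    have hdesc : 0 ≤ (grad Xt * D).trace := by
      have h := hconv Xt Xstar (hKsymm _ hXt) (hKsymm _ hXstar)
      rw [show Xstar - Xt = (-t) • D by simp only [Xt]; module, Matrix.mul_smul,
        Matrix.trace_smul, smul_eq_mul] at h
      nlinarith [isMinOn_iff.1 hopt Xt hXt]
    have hlip : ((grad Xt - grad Xstar) * D).trace ≤ β * (t * frobNorm D) * frobNorm D := by
      have h := hsmooth Xt Xstar (hKsymm _ hXt) (hKsymm _ hXstar)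
      rw [show Xt - Xstar = t • D by simp only [Xt]; abel, frobNorm_smul, abs_of_pos ht₀] at h
      exact (trace_mul_le_frobNorm_mul _ _).trans
        (mul_le_mul_of_nonneg_right h (frobNorm_nonneg D))
    rw [Matrix.sub_mul, Matrix.trace_sub] at hlip
    nlinarith
  have hlim : Filter.Tendsto (fun t : ℝ => -(t * (β * frobNorm D ^ 2)))
      (nhdsWithin 0 (Set.Ioi 0)) (nhds 0) := by
    apply tendsto_nhdsWithin_of_tendsto_nhds
    have hcont : Continuous fun t : ℝ => -(t * (β * frobNorm D ^ 2)) := by fun_prop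
    simpa using hcont.tendsto 0
  exact le_of_tendsto hlim (Filter.mem_of_superset (Ioc_mem_nhdsGT one_pos) hnear)

end optimality

/-- For orthogonal `V`, the span of the columns `V j`, `j ∈ s`. -/
def spanCols (V : Matrix (Fin n) (Fin n) ℝ) (s : Finset (Fin n)) : Submodule ℝ (Fin n → ℝ) :=
  LinearMap.ker (diagonal (fun j => if j ∈ s then 0 else 1) * Vᵀ).mulVecLin

section spanCols

variable {V : Matrix (Fin n) (Fin n) ℝ} {s : Finset (Fin n)}

lemma mem_spanCols_iff {u : Fin n → ℝ} : u ∈ spanCols V s ↔ ∀ j ∉ s, (Vᵀ *ᵥ u) j = 0 := by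
  simp only [spanCols, LinearMap.mem_ker, Matrix.mulVecLin_apply, ← Matrix.mulVec_mulVec,
    funext_iff, Matrix.mulVec_diagonal, Pi.zero_apply]
  refine forall_congr' fun j => ?_
  split_ifs with hj <;> simp [hj]

lemma finrank_spanCols (hV : Vᵀ * V = 1) : Module.finrank ℝ (spanCols V s) = s.card := by
  have hrank := LinearMap.finrank_range_add_finrank_ker
    (diagonal (fun j => if j ∈ s then (0 : ℝ) else 1) * Vᵀ).mulVecLin
  rw [← Matrix.rank, Matrix.rank_mul_eq_left_of_isUnit_det Vᵀ _
    (by rw [Matrix.det_transpose]; exact isUnit_det_of_transpose_mul_self hV),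
    Matrix.rank_diagonal, Module.finrank_fin_fun] at hrank
  have hcard : Fintype.card {j // (if j ∈ s then (0 : ℝ) else 1) ≠ 0} = sᶜ.card := by
    rw [Fintype.card_subtype]
    congr 1
    ext j
    simp
  have hs := s.card_add_card_compl
  rw [hcard] at hrank
  rw [Fintype.card_fin] at hs
  rw [spanCols]
  omega

lemma dotProduct_self_eq_sum (hV : Vᵀ * V = 1) (u : Fin n → ℝ) :
    u ⬝ᵥ u = ∑ j, (Vᵀ *ᵥ u) j ^ 2 := by
  simp only [sq]
  rw [← dotProduct, Matrix.dotProduct_mulVec, Matrix.vecMul_transpose, Matrix.mulVec_mulVec,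
    mul_transpose_eq_one hV, Matrix.one_mulVec]

lemma dotProduct_conj_diagonal_mulVec (V : Matrix (Fin n) (Fin n) ℝ) (l u : Fin n → ℝ) :
    u ⬝ᵥ (V * diagonal l * Vᵀ) *ᵥ u = ∑ j, l j * (Vᵀ *ᵥ u) j ^ 2 := by
  rw [← Matrix.mulVec_mulVec, ← Matrix.mulVec_mulVec, Matrix.dotProduct_mulVec,
    ← Matrix.mulVec_transpose]
  simp only [dotProduct, Matrix.mulVec_diagonal]
  exact Finset.sum_congr rfl fun j _ => by ring

lemma dotProduct_conj_diagonal_mulVec_le (hV : Vᵀ * V = 1) {u : Fin n → ℝ}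
    (hu : u ∈ spanCols V s) {l : Fin n → ℝ} {c : ℝ} (hl : ∀ j ∈ s, l j ≤ c) :
    u ⬝ᵥ (V * diagonal l * Vᵀ) *ᵥ u ≤ c * (u ⬝ᵥ u) := by
  rw [dotProduct_conj_diagonal_mulVec, dotProduct_self_eq_sum hV, Finset.mul_sum]
  refine Finset.sum_le_sum fun j _ => ?_
  by_cases hj : j ∈ s
  · exact mul_le_mul_of_nonneg_right (hl j hj) (sq_nonneg _)
  · simp [mem_spanCols_iff.1 hu j hj]

lemma lt_dotProduct_conj_diagonal_mulVec (hV : Vᵀ * V = 1) {u : Fin n → ℝ}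
    (hu : u ∈ spanCols V s) (hu₀ : u ≠ 0) {l : Fin n → ℝ} {c : ℝ} (hl : ∀ j ∈ s, c < l j) :
    c * (u ⬝ᵥ u) < u ⬝ᵥ (V * diagonal l * Vᵀ) *ᵥ u := by
  have hcoeff : Vᵀ *ᵥ u ≠ 0 := fun h => hu₀ <| by
    rw [← Matrix.one_mulVec u, ← mul_transpose_eq_one hV, ← Matrix.mulVec_mulVec, h,
      Matrix.mulVec_zero]
  obtain ⟨j, hj⟩ := Function.ne_iff.1 hcoeff
  have hjs : j ∈ s := by_contra fun h => hj (mem_spanCols_iff.1 hu j h)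
  rw [dotProduct_conj_diagonal_mulVec, dotProduct_self_eq_sum hV, Finset.mul_sum]
  refine Finset.sum_lt_sum (fun i _ => ?_) ⟨j, Finset.mem_univ j, ?_⟩
  · by_cases hi : i ∈ s
    · exact mul_le_mul_of_nonneg_right (hl i hi).le (sq_nonneg _)
    · simp [mem_spanCols_iff.1 hu i hi]
  · exact mul_lt_mul_of_pos_right (hl j hjs) (sq_pos_of_ne_zero hj)

end spanCols

section perturbation

variable {V V' : Matrix (Fin n) (Fin n) ℝ} {l m : Fin n → ℝ}

lemma card_add_card_le_of_frobNorm_le (hV : Vᵀ * V = 1) (hV' : V'ᵀ * V' = 1)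
    {s t : Finset (Fin n)} {c c' : ℝ} (hl : ∀ j ∈ s, c < l j) (hm : ∀ i ∈ t, m i ≤ c')
    (hE : frobNorm (V * diagonal l * Vᵀ - V' * diagonal m * V'ᵀ) ≤ c - c') :
    s.card + t.card ≤ n := by
  have hdisj : Disjoint (spanCols V s) (spanCols V' t) := by
    rw [Submodule.disjoint_def]
    intro u hu hu'
    by_contra hu₀
    have hE' := dotProduct_mulVec_le_frobNorm_mul (V * diagonal l * Vᵀ - V' * diagonal m * V'ᵀ) u
    rw [Matrix.sub_mulVec, dotProduct_sub] at hE'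
    nlinarith [lt_dotProduct_conj_diagonal_mulVec hV hu hu₀ hl,
      dotProduct_conj_diagonal_mulVec_le hV' hu' hm, dotProduct_self_nonneg u]
  have := Submodule.finrank_add_finrank_le_of_disjoint hdisj
  rwa [finrank_spanCols hV, finrank_spanCols hV', Module.finrank_fin_fun] at this

lemma exists_cluster_of_frobNorm_le (hV : Vᵀ * V = 1) (hV' : V'ᵀ * V' = 1) {S : Finset (Fin n)}
    {a b e : ℝ} (hmS : ∀ i ∈ S, b ≤ m i) (hmSc : ∀ i ∉ S, m i ≤ a)
    (hE : frobNorm (V * diagonal l * Vᵀ - V' * diagonal m * V'ᵀ) ≤ e) (he : 2 * e < b - a) :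
    ∃ T : Finset (Fin n), T.card = S.card ∧ (∀ j ∈ T, b - e ≤ l j) ∧ ∀ j ∉ T, l j ≤ a + e := by
  -- at most `#S` of the `l j` exceed `a + e`, and at least `#S` of them reach `b - e`
  set T := Finset.univ.filter fun j => a + e < l j
  set T' := Finset.univ.filter fun j => b - e ≤ l j
  have hT : T.card + Sᶜ.card ≤ n :=
    card_add_card_le_of_frobNorm_le hV hV' (c := a + e) (c' := a)
      (fun j hj => by simpa [T] using hj) (fun i hi => hmSc i (Finset.mem_compl.1 hi))
      (by linarith)
  have hT' : T'ᶜ.card + S.card ≤ n := by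
    refine card_add_card_le_of_frobNorm_le hV hV' (l := -l) (m := -m) (c := -(b - e)) (c' := -b)
      (fun j hj => ?_) (fun i hi => by simpa using hmS i hi) ?_
    · simp only [T', Finset.mem_compl, Finset.mem_filter, Finset.mem_univ, true_and,
        not_le] at hj
      simp only [Pi.neg_apply]
      linarith
    · rw [← neg_conj_diagonal, ← neg_conj_diagonal, neg_sub_neg, frobNorm_sub_comm]
      linarith
  have hsub : T' ⊆ T := fun j hj => by
    simp only [T, T', Finset.mem_filter, Finset.mem_univ, true_and] at hj ⊢
    linarith
  have hS := S.card_add_card_compl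
  have hT'c := T'.card_add_card_compl
  have hle := Finset.card_le_card hsub
  rw [Fintype.card_fin] at hS hT'c
  have heq : T' = T := Finset.eq_of_subset_of_card_le hsub (by omega)
  refine ⟨T, by omega, fun j hj => ?_, fun j hj => by simpa [T] using hj⟩
  rw [← heq] at hj
  simpa [T'] using hj

end perturbation

section spectral

variable {A : Matrix (Fin n) (Fin n) ℝ}

lemma exists_conj_diagonal_sorted (hA : A.IsHermitian) :
    ∃ V : Matrix (Fin n) (Fin n) ℝ, Vᵀ * V = 1 ∧
      A = V * diagonal (hA.eigenvalues ∘ Tuple.sort hA.eigenvalues) * Vᵀ := by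
  set U : Matrix (Fin n) (Fin n) ℝ := (hA.eigenvectorUnitary : Matrix (Fin n) (Fin n) ℝ)
  set σ := Tuple.sort hA.eigenvalues
  have hstar : star U = Uᵀ := by
    rw [Matrix.star_eq_conjTranspose, Matrix.conjTranspose_eq_transpose_of_trivial]
  have hU : Uᵀ * U = 1 := hstar ▸ Unitary.coe_star_mul_self hA.eigenvectorUnitary
  have hspec : A = U * diagonal hA.eigenvalues * Uᵀ := by
    rw [← hstar]
    simpa [Unitary.conjStarAlgAut_apply] using hA.spectral_theorem
  refine ⟨U.submatrix id σ, ?_, ?_⟩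
  · rw [Matrix.transpose_submatrix, ← Matrix.submatrix_mul _ _ _ _ _ Function.bijective_id, hU]
    exact Matrix.submatrix_one_equiv σ
  · rw [← Matrix.submatrix_diagonal_equiv, Matrix.transpose_submatrix,
      Matrix.submatrix_mul_equiv, Matrix.submatrix_mul_equiv, ← hspec, Matrix.submatrix_id_id]

lemma exists_conj_diagonal (hA : A.IsSymm) :
    ∃ (V : Matrix (Fin n) (Fin n) ℝ) (l : Fin n → ℝ), Vᵀ * V = 1 ∧ A = V * diagonal l * Vᵀ :=
  let ⟨V, hV, hAV⟩ := exists_conj_diagonal_sorted (Matrix.isHermitian_iff_isSymm.2 hA)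
  ⟨V, _, hV, hAV⟩

/-- `eigval` counts from the top while `Tuple.sort` orders increasingly. -/
lemma eigval_sub_val (hA : A.IsHermitian) (j : Fin n) :
    eigval A (n - j) = (hA.eigenvalues ∘ Tuple.sort hA.eigenvalues) j := by
  rw [eigval, dif_pos hA, dif_pos (by omega)]
  congr
  omega

lemma exists_conj_diagonal_of_eigval_gap (hA : A.IsSymm) {k : ℕ} (hk : 0 < k) (hkn : k < n) :
    ∃ (V : Matrix (Fin n) (Fin n) ℝ) (w : Fin n → ℝ) (T : Finset (Fin n)) (c : ℝ),
      Vᵀ * V = 1 ∧ A = V * diagonal w * Vᵀ ∧ T.card = k ∧ (∀ i ∈ T, w i ≤ c) ∧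
      ∀ i ∉ T, c + (eigval A (n - k) - eigval A (n - k + 1)) ≤ w i := by
  have hA' : A.IsHermitian := Matrix.isHermitian_iff_isSymm.2 hA
  obtain ⟨V, hV, hAV⟩ := exists_conj_diagonal_sorted hA'
  set w := hA'.eigenvalues ∘ Tuple.sort hA'.eigenvalues
  have hw : Monotone w := Tuple.monotone_sort _
  have hgap : eigval A (n - k) - eigval A (n - k + 1) = w ⟨k, hkn⟩ - w ⟨k - 1, by omega⟩ := by
    rw [show n - k + 1 = n - (k - 1) by omega]
    exact congrArg₂ _ (eigval_sub_val hA' ⟨k, hkn⟩) (eigval_sub_val hA' ⟨k - 1, by omega⟩)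
  refine ⟨V, w, Finset.univ.filter fun i => (i : ℕ) < k, w ⟨k - 1, by omega⟩, hV, hAV,
    by simp [Fin.card_filter_val_lt, hkn.le], fun i hi => hw ?_, fun i hi => ?_⟩
  · simp only [Finset.mem_filter, Finset.mem_univ, true_and] at hi
    exact Fin.le_iff_val_le_val.2 (by simp only; omega)
  · simp only [Finset.mem_filter, Finset.mem_univ, true_and, not_lt] at hi
    rw [hgap, add_sub_cancel]
    exact hw (Fin.mk_le_mk.2 hi)

end spectral

end FantopeProjection

open FantopeProjection

theorem stmt8 {n k : ℕ} (hk : 0 < k) (hkn : k < n)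
    (f : Matrix (Fin n) (Fin n) ℝ → ℝ)
    (grad : Matrix (Fin n) (Fin n) ℝ → Matrix (Fin n) (Fin n) ℝ)
    (β : ℝ) (hβ : 0 < β)
    (hgradSymm : ∀ X : Matrix (Fin n) (Fin n) ℝ, (grad X).IsSymm)
    (hconv : ∀ X Y : Matrix (Fin n) (Fin n) ℝ, X.IsSymm → Y.IsSymm →
      f X + (grad X * (Y - X)).trace ≤ f Y)
    (hsmooth : ∀ X Y : Matrix (Fin n) (Fin n) ℝ, X.IsSymm → Y.IsSymm →
      frobNorm (grad X - grad Y) ≤ β * frobNorm (X - Y))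
    (Xstar : Matrix (Fin n) (Fin n) ℝ)
    (hXstarMem : Xstar ∈ Fantope n k)
    (hXstarOpt : ∀ X ∈ Fantope n k, f Xstar ≤ f X)
    (δ : ℝ) (hδ : 0 < δ)
    (hgap : δ ≤ eigval (grad Xstar) (n - k) - eigval (grad Xstar) (n - k + 1))
    (Pi : Matrix (Fin n) (Fin n) ℝ → Matrix (Fin n) (Fin n) ℝ)
    (hPi : ∀ W : Matrix (Fin n) (Fin n) ℝ, Pi W ∈ Fantope n k ∧
      ∀ Z ∈ Fantope n k, frobNorm (Pi W - W) ≤ frobNorm (Z - W))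
    (η : ℝ) (hη : 0 < η) :
    ∀ X ∈ Fantope n k,
      frobNorm (X - Xstar) ≤ η * δ / (2 * (1 + η * β)) →
      (Pi (X - η • grad X)).rank = k := by
  intro X hX hclose
  obtain ⟨V, w, T₀, c, hV, hG, hT₀, hwT₀, hwT₀c⟩ :=
    exists_conj_diagonal_of_eigval_gap (hgradSymm Xstar) hk hkn
  have hXstar : Xstar = spectralProj V T₀ := by
    refine eq_spectralProj_of_trace_le hV hXstarMem hT₀ hδ hwT₀
      (fun i hi => by linarith [hwT₀c i hi]) ?_
    have hopt := trace_grad_mul_sub_nonneg_of_isMinOn (convex_fantope k) (fun Y hY => hY.1) hconv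
      hsmooth hXstarMem (isMinOn_iff.2 hXstarOpt) (spectralProj_mem_fantope hV hT₀)
    rw [Matrix.mul_sub, Matrix.trace_sub, hG, trace_conj_diagonal_mul_spectralProj hV] at hopt
    linarith
  set μ : Fin n → ℝ := (fun i => if i ∈ T₀ then 1 else 0) - η • w
  have hstep : Xstar - η • grad Xstar = V * diagonal μ * Vᵀ := by
    rw [hG, hXstar, spectralProj, smul_conj_diagonal, conj_diagonal_sub]
  obtain ⟨V', l, hV', hW⟩ := exists_conj_diagonal (hX.1.sub ((hgradSymm X).smul η))
  have hE : frobNorm (V' * diagonal l * V'ᵀ - V * diagonal μ * Vᵀ) ≤ η * δ / 2 := by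
    rw [← hW, ← hstep]
    calc _ ≤ (1 + η * β) * frobNorm (X - Xstar) :=
          frobNorm_gradient_step_sub_le hsmooth hη.le hX.1 hXstarMem.1
      _ ≤ (1 + η * β) * (η * δ / (2 * (1 + η * β))) := by gcongr
      _ = η * δ / 2 := by field_simp
  obtain ⟨T, hT, hlT, hlTc⟩ := exists_cluster_of_frobNorm_le hV' hV (S := T₀)
    (a := -(η * (c + δ))) (b := 1 - η * c)
    (fun i hi => by simp [μ, hi]; nlinarith [hwT₀ i hi])
    (fun i hi => by simp [μ, hi]; nlinarith [hwT₀c i hi]) hE (by nlinarith)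
  rw [hT₀] at hT
  have hproj : Pi (X - η • grad X) = spectralProj V' T := by
    refine eq_spectralProj_of_frobNorm_le hV' hT hlT hlTc (by linarith) (hPi _).1 ?_
    rw [← hW]
    exact (hPi _).2 _ (spectralProj_mem_fantope hV' hT)
  rw [hproj, rank_spectralProj hV', hT]
end
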